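/- arXiv:0805.2518 — 2 statements merged into one kernel-verified Lean document; each statement's English description precedes it below -/
import Mathlib

section
/- Let φ satisfy (BB), (RP) and (T), and let λ₀ > 0. Then there exists a decreasing map Ψ̃ : ℕ₀ → [0,∞) with Σ_{r∈ℤ^d} Ψ̃(|r|) < ∞ such that for all λ ≥ λ₀ and all disjoint finite sets Z, Z′ ⊂ ℝ^d it holds W_{φ_λ}(Z, Z′) ≥ −Σ_{r,r′∈ℤ^d} Ψ̃(|r−r′|)·#(Z ∩ Q_1(r))·#(Z′ ∩ Q_1(r′)). -/
open MeasureTheory Filter Set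
open scoped BigOperators ENNReal Topology

noncomputable section

/-- ℝ^d with the maximum norm. -/
abbrev Rd (d : ℕ) : Type := Fin d → ℝ

/-- ℤ^d. -/
abbrev Zd (d : ℕ) : Type := Fin d → ℤ

/-- The point y + 2λr. -/
def shiftPt {d : ℕ} (l : ℝ) (y : Rd d) (r : Zd d) : Rd d := fun i => y i + 2 * l * (r i : ℝ)

/-- Λ_λ = (−λ,λ]^d. -/
def Lam {d : ℕ} (l : ℝ) : Set (Rd d) := {x | ∀ i, -l < x i ∧ x i ≤ l}

/-- The open cube (−λ,λ)^d. -/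
def LamO {d : ℕ} (l : ℝ) : Set (Rd d) := {x | ∀ i, -l < x i ∧ x i < l}

/-- The periodic sum Σ_{r∈ℤ^d} φ(y+2λr) (= 0 by convention if not absolutely convergent). -/
def periodize {d : ℕ} (φ : Rd d → ℝ) (l : ℝ) (y : Rd d) : ℝ :=
  ∑' r : Zd d, φ (shiftPt l y r)

/-- φ_λ = 1_{(−λ,λ)^d} · Σ_{r∈ℤ^d} φ(·+2λr). -/
def philam {d : ℕ} (φ : Rd d → ℝ) (l : ℝ) : Rd d → ℝ :=
  (LamO l).indicator (periodize φ l)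

/-- The half-open cube Q_δ(r). -/
def Qcube {d : ℕ} (δ : ℝ) (r : Zd d) : Set (Rd d) :=
  {x | ∀ i, δ * ((r i : ℝ) - 1/2) ≤ x i ∧ x i < δ * ((r i : ℝ) + 1/2)}

/-- #(A ∩ Q_δ(r)). -/
def cnt {d : ℕ} (A : Set (Rd d)) (δ : ℝ) (r : Zd d) : ℕ := (A ∩ Qcube δ r).ncard

/-- The maximum norm of r ∈ ℤ^d as a natural number. -/
def znorm {d : ℕ} (r : Zd d) : ℕ := Finset.univ.sup fun i => (r i).natAbs

/-- W_ψ(Z, Z'). -/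
def interEF {d : ℕ} (ψ : Rd d → ℝ) (Z Z' : Finset (Rd d)) : ℝ :=
  ∑ x ∈ Z, ∑ y ∈ Z', ψ (x - y)

/-!
From (BB) and (T), `φ x ≥ -A (1 + |x|)^(-q)` with `q = d + ε`. For `z ∈ (-λ, λ)^d` and
`λ ≥ λ₀`, the translate `z + 2λr` has norm comparable to `(1 + |z|)(1 + |r|)` up to a constant
depending only on `λ₀`, so the periodisation is at least `-K (1 + |z|)^(-q)` with
`K ∝ Σ_r (1 + |r|)^(-q) < ∞`. Replacing each point by the index of its unit cube `Q_1(r)` changes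
distances by at most `1`, which gives the claim with `Ψ̃ n = 2^q K (1 + n)^(-q)`.
-/

open scoped Finset

theorem summable_pi_prod {ι κ : Type*} [Fintype ι] {w : κ → ℝ} (hw0 : ∀ k, 0 ≤ w k)
    (hw : Summable w) : Summable fun r : ι → κ => ∏ i, w (r i) := by
  classical
  refine summable_of_sum_le (c := ∏ _i : ι, ∑' k, w k)
    (fun r => Finset.prod_nonneg fun i _ => hw0 _) fun u => ?_
  calc ∑ r ∈ u, ∏ i, w (r i)
      ≤ ∑ r ∈ Fintype.piFinset fun i => u.image (· i), ∏ i, w (r i) :=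
        Finset.sum_le_sum_of_subset_of_nonneg
          (fun r hr => Fintype.mem_piFinset.2 fun i => Finset.mem_image_of_mem _ hr)
          fun r _ _ => Finset.prod_nonneg fun i _ => hw0 _
    _ = ∏ i, ∑ k ∈ u.image (· i), w k := (Finset.prod_univ_sum _ _).symm
    _ ≤ ∏ _i : ι, ∑' k, w k :=
        Finset.prod_le_prod (fun i _ => Finset.sum_nonneg fun k _ => hw0 k)
          fun i _ => hw.sum_le_tsum _ fun k _ => hw0 k

theorem summable_one_add_norm_int_rpow_neg {a : ℝ} (ha : 1 < a) :
    Summable fun k : ℤ => (1 + ‖k‖) ^ (-a) := by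
  refine (Real.summable_abs_int_rpow ha).of_norm_bounded_eventually ?_
  filter_upwards [(Set.finite_singleton (0 : ℤ)).compl_mem_cofinite] with k hk
  rw [Real.norm_of_nonneg (by positivity), Int.norm_eq_abs]
  have hk0 : (0 : ℝ) < |(k : ℝ)| := by simpa using hk
  exact Real.rpow_le_rpow_of_nonpos hk0 (by linarith) (by linarith)

theorem summable_one_add_norm_rpow_neg {ι : Type*} [Fintype ι] {q : ℝ}
    (hq : (Fintype.card ι : ℝ) < q) : Summable fun r : ι → ℤ => (1 + ‖r‖) ^ (-q) := by
  rcases isEmpty_or_nonempty ι with _ | _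
  · exact .of_finite
  have hcard : (0 : ℝ) < Fintype.card ι := by exact_mod_cast Fintype.card_pos
  set a := q / Fintype.card ι
  have ha : 1 < a := (one_lt_div hcard).2 hq
  refine (summable_pi_prod (fun k => by positivity)
    (summable_one_add_norm_int_rpow_neg ha)).of_nonneg_of_le (fun r => by positivity) fun r => ?_
  calc (1 + ‖r‖) ^ (-q) = ∏ _i : ι, (1 + ‖r‖) ^ (-a) := by
        rw [Finset.prod_const, Finset.card_univ, ← Real.rpow_mul_natCast (by positivity),
          neg_mul, div_mul_cancel₀ q hcard.ne']
    _ ≤ ∏ i, (1 + ‖r i‖) ^ (-a) :=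
        Finset.prod_le_prod (fun i _ => by positivity) fun i _ =>
          Real.rpow_le_rpow_of_nonpos (by positivity) (by gcongr; exact norm_le_pi_norm r i)
            (by linarith)

theorem rpow_neg_le_of_le_mul {a b c q : ℝ} (ha : 0 < a) (hb : 0 < b) (hc : 0 < c) (hq : 0 ≤ q)
    (h : b ≤ c * a) : a ^ (-q) ≤ c ^ q * b ^ (-q) :=
  calc a ^ (-q) = c ^ q * (c * a) ^ (-q) := by
        rw [Real.mul_rpow hc.le ha.le, ← mul_assoc, Real.rpow_neg hc.le,
          mul_inv_cancel₀ (Real.rpow_pos_of_pos hc q).ne', one_mul]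
    _ ≤ c ^ q * b ^ (-q) :=
        mul_le_mul_of_nonneg_left (Real.rpow_le_rpow_of_nonpos hb h (by linarith)) (by positivity)

/-- No summability of `f` is needed: a non-summable `∑'` is `0`, which lies above `∑' i, g i`. -/
theorem tsum_le_tsum_of_nonpos {ι : Type*} {f g : ι → ℝ} (hg : Summable g) (hg0 : ∀ i, g i ≤ 0)
    (h : ∀ i, g i ≤ f i) : ∑' i, g i ≤ ∑' i, f i := by
  by_cases hf : Summable f
  · exact hg.tsum_le_tsum h hf
  · rw [tsum_eq_zero_of_not_summable hf]
    exact tsum_nonpos hg0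

theorem exists_neg_mul_one_add_norm_rpow_le {E : Type*} [SeminormedAddCommGroup E] {φ : E → ℝ}
    {M R G q : ℝ} (hR : 0 < R) (hq : 0 ≤ q) (hBB : ∀ x, -M ≤ φ x)
    (hT : ∀ x, R ≤ ‖x‖ → -(G * ‖x‖ ^ (-q)) ≤ φ x) :
    ∃ A, 0 ≤ A ∧ ∀ x, -(A * (1 + ‖x‖) ^ (-q)) ≤ φ x := by
  refine ⟨max M 0 * (1 + R) ^ q + max G 0 * (1 + R⁻¹) ^ q, by positivity, fun x => ?_⟩
  have hx0 : 0 < 1 + ‖x‖ := by positivity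
  have hGterm : 0 ≤ max G 0 * (1 + R⁻¹) ^ q * (1 + ‖x‖) ^ (-q) := by positivity
  have hMterm : 0 ≤ max M 0 * (1 + R) ^ q * (1 + ‖x‖) ^ (-q) := by positivity
  rcases lt_or_ge ‖x‖ R with hxR | hxR
  · have h1 : (1 : ℝ) ≤ (1 + R) ^ q * (1 + ‖x‖) ^ (-q) := by
      simpa using rpow_neg_le_of_le_mul one_pos hx0 (by linarith) hq (by linarith)
    nlinarith [hBB x, le_max_left M 0, le_max_right M 0]
  · have hx : 0 < ‖x‖ := hR.trans_le hxR
    have h1 : ‖x‖ ^ (-q) ≤ (1 + R⁻¹) ^ q * (1 + ‖x‖) ^ (-q) := by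
      refine rpow_neg_le_of_le_mul hx hx0 (by positivity) hq ?_
      have : 1 ≤ R⁻¹ * ‖x‖ := by rw [inv_mul_eq_div, one_le_div hR]; exact hxR
      linarith
    nlinarith [hT x hxR, le_max_left G 0, le_max_right G 0, Real.rpow_nonneg hx.le (-q)]

theorem sum_comp_eq_tsum {α β : Type*} [DecidableEq β] (s : Finset α) (g : α → β) (f : β → ℝ) :
    ∑ a ∈ s, f (g a) = ∑' b, (#{a ∈ s | g a = b} : ℝ) * f b := by
  rw [Finset.sum_comp, tsum_eq_sum (s := s.image g) fun b hb => ?_]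
  · simp only [nsmul_eq_mul]
  · rw [Finset.card_eq_zero.2, Nat.cast_zero, zero_mul]
    exact Finset.filter_eq_empty_iff.2 fun a ha hab => hb (hab ▸ Finset.mem_image_of_mem g ha)

section Lattice

variable {d : ℕ}

theorem znorm_eq_norm (r : Zd d) : (znorm r : ℝ) = ‖r‖ := by
  refine le_antisymm ?_ ?_
  · refine le_trans (Nat.cast_le.2 <| Finset.sup_le fun i _ => ?_) (Nat.floor_le (norm_nonneg r))
    refine Nat.le_floor ?_
    rw [Nat.cast_natAbs, Int.cast_abs, ← Int.norm_eq_abs]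
    exact norm_le_pi_norm r i
  · refine (pi_norm_le_iff_of_nonneg (Nat.cast_nonneg _)).2 fun i => ?_
    rw [Int.norm_eq_abs, ← Int.cast_abs, ← Nat.cast_natAbs]
    exact Nat.cast_le.2 (Finset.le_sup (f := fun i => (r i).natAbs) (Finset.mem_univ i))

theorem norm_intCast_pi (r : Zd d) : ‖(fun i => (r i : ℝ) : Rd d)‖ = ‖r‖ := by
  simp only [Pi.norm_def]
  congr 2

theorem one_le_norm_of_ne_zero {r : Zd d} (hr : r ≠ 0) : 1 ≤ ‖r‖ := by
  obtain ⟨i, hi⟩ := Function.ne_iff.1 hr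
  refine le_trans ?_ (norm_le_pi_norm r i)
  rw [Int.norm_eq_abs, ← Int.cast_abs]
  exact_mod_cast Int.one_le_abs hi

theorem shiftPt_eq_add_smul (l : ℝ) (y : Rd d) (r : Zd d) :
    shiftPt l y r = y + (2 * l) • (fun i => (r i : ℝ) : Rd d) := rfl

theorem norm_le_of_mem_LamO {l : ℝ} (hl : 0 ≤ l) {z : Rd d} (hz : z ∈ LamO l) : ‖z‖ ≤ l :=
  (pi_norm_le_iff_of_nonneg hl).2 fun i => (abs_lt.2 (hz i)).le

theorem one_add_norm_mul_one_add_norm_le {l₀ l : ℝ} (hl₀ : 0 < l₀) (hl : l₀ ≤ l)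
    {z : Rd d} (hz : z ∈ LamO l) (r : Zd d) :
    (1 + ‖z‖) * (1 + ‖r‖) ≤ 4 / min 1 l₀ * (1 + ‖shiftPt l z r‖) := by
  have hl0 : 0 ≤ l := hl₀.le.trans hl
  have hzl : ‖z‖ ≤ l := norm_le_of_mem_LamO hl0 hz
  have hc1 : min 1 l₀ ≤ 1 := min_le_left _ _
  have hcl : min 1 l₀ ≤ l := (min_le_right _ _).trans hl
  have hc0 : 0 < min 1 l₀ := lt_min one_pos hl₀
  rw [div_mul_eq_mul_div, le_div_iff₀ hc0]
  rcases eq_or_ne r 0 with rfl | hr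
  · have : shiftPt l z 0 = z := by ext i; simp [shiftPt]
    rw [this, norm_zero]
    nlinarith [norm_nonneg z]
  · have hr1 := one_le_norm_of_ne_zero hr
    have hshift : 2 * l * ‖r‖ - ‖z‖ ≤ ‖shiftPt l z r‖ := by
      have := norm_sub_norm_le ((2 * l) • (fun i => (r i : ℝ) : Rd d)) (-z)
      rw [norm_smul, norm_intCast_pi, norm_neg, Real.norm_of_nonneg (by linarith),
        sub_neg_eq_add, add_comm] at this
      rwa [shiftPt_eq_add_smul]
    have hprod : (1 + ‖z‖) * (1 + ‖r‖) ≤ (1 + l) * (2 * ‖r‖) :=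
      mul_le_mul (by linarith) (by linarith) (by positivity) (by linarith)
    have hc : min 1 l₀ / 4 * ((1 + l) * (2 * ‖r‖)) ≤ l * ‖r‖ := by
      nlinarith [mul_le_mul_of_nonneg_right hcl (norm_nonneg r),
        mul_le_mul_of_nonneg_left hc1 (mul_nonneg hl0 (norm_nonneg r))]
    nlinarith [mul_le_mul_of_nonneg_right hprod hc0.le, mul_le_mul_of_nonneg_left hr1 hl0]

theorem exists_neg_mul_one_add_norm_rpow_le_philam {φ : Rd d → ℝ} {A q l₀ : ℝ}
    (hA0 : 0 ≤ A) (hA : ∀ x, -(A * (1 + ‖x‖) ^ (-q)) ≤ φ x) (hq : (d : ℝ) < q) (hl₀ : 0 < l₀) :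
    ∃ K, 0 ≤ K ∧ ∀ l, l₀ ≤ l → ∀ x, -(K * (1 + ‖x‖) ^ (-q)) ≤ philam φ l x := by
  have hq0 : 0 ≤ q := (Nat.cast_nonneg d).trans hq.le
  have hsum : Summable fun r : Zd d => (1 + ‖r‖) ^ (-q) :=
    summable_one_add_norm_rpow_neg (by simpa using hq)
  set c := 4 / min 1 l₀
  have hc : 0 < c := div_pos four_pos (lt_min one_pos hl₀)
  refine ⟨A * c ^ q * ∑' r : Zd d, (1 + ‖r‖) ^ (-q), by positivity, fun l hl x => ?_⟩
  by_cases hx : x ∈ LamO l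
  · have hsplit : -(A * c ^ q * (∑' r : Zd d, (1 + ‖r‖) ^ (-q)) * (1 + ‖x‖) ^ (-q)) =
        ∑' r : Zd d, -(A * c ^ q * (1 + ‖x‖) ^ (-q) * (1 + ‖r‖) ^ (-q)) := by
      rw [tsum_neg, tsum_mul_left]; ring
    rw [philam, Set.indicator_of_mem hx, periodize, hsplit]
    refine tsum_le_tsum_of_nonpos (hsum.mul_left _).neg (fun r => ?_) fun r => ?_
    · rw [neg_nonpos]; positivity
    · refine le_trans ?_ (hA _)
      have hshift := rpow_neg_le_of_le_mul (by positivity) (by positivity) hc hq0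
        (one_add_norm_mul_one_add_norm_le hl₀ hl hx r)
      rw [Real.mul_rpow (by positivity) (by positivity)] at hshift
      have := mul_le_mul_of_nonneg_left hshift hA0
      linarith
  · rw [philam, Set.indicator_of_notMem hx, neg_nonpos]
    positivity

def cubeIndex (x : Rd d) : Zd d := fun i => ⌊x i + 1 / 2⌋

theorem cubeIndex_eq_iff {x : Rd d} {r : Zd d} : cubeIndex x = r ↔ x ∈ Qcube 1 r := by
  simp only [funext_iff, cubeIndex, Int.floor_eq_iff, Qcube, Set.mem_ofPred_eq, one_mul]
  refine forall_congr' fun i => ?_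
  constructor <;> rintro ⟨h₁, h₂⟩ <;> constructor <;> linarith

theorem norm_cubeIndex_sub_le (x y : Rd d) : ‖cubeIndex x - cubeIndex y‖ ≤ ‖x - y‖ + 1 := by
  refine (pi_norm_le_iff_of_nonneg (by positivity)).2 fun i => ?_
  have hxy : |x i - y i| ≤ ‖x - y‖ := norm_le_pi_norm (x - y) i
  have hx := Int.floor_le (x i + 1 / 2)
  have hx' := Int.lt_floor_add_one (x i + 1 / 2)
  have hy := Int.floor_le (y i + 1 / 2)
  have hy' := Int.lt_floor_add_one (y i + 1 / 2)
  rw [Pi.sub_apply, Int.norm_eq_abs, Int.cast_sub, abs_le]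
  simp only [cubeIndex]
  constructor <;> linarith [abs_le.1 hxy]

theorem cnt_eq_card_filter (Z : Finset (Rd d)) (r : Zd d) :
    cnt (Z : Set (Rd d)) 1 r = #{x ∈ Z | cubeIndex x = r} := by
  rw [cnt, ← Set.ncard_coe_finset]
  congr 1
  ext x
  simp [cubeIndex_eq_iff]

theorem sum_sum_cubeIndex_eq_tsum (Z Z' : Finset (Rd d)) (F : Zd d → Zd d → ℝ) :
    ∑ x ∈ Z, ∑ y ∈ Z', F (cubeIndex x) (cubeIndex y) =
      ∑' p : Zd d × Zd d, F p.1 p.2 * (cnt (Z : Set (Rd d)) 1 p.1 : ℝ) *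
        (cnt (Z' : Set (Rd d)) 1 p.2 : ℝ) := by
  classical
  rw [← Finset.sum_product' (f := fun x y => F (cubeIndex x) (cubeIndex y))]
  refine (sum_comp_eq_tsum (Z ×ˢ Z') (Prod.map cubeIndex cubeIndex) fun p => F p.1 p.2).trans
    (tsum_congr fun p => ?_)
  have hcard : #{a ∈ Z ×ˢ Z' | Prod.map cubeIndex cubeIndex a = p} =
      #{x ∈ Z | cubeIndex x = p.1} * #{y ∈ Z' | cubeIndex y = p.2} := by
    simp only [← Finset.card_product, ← Finset.filter_product, Prod.ext_iff, Prod.map_fst,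
      Prod.map_snd]
  rw [cnt_eq_card_filter, cnt_eq_card_filter, hcard]
  push_cast
  ring

end Lattice

theorem stmt6_general (d : ℕ)
    (φ : Rd d → ℝ)
    (M : ℝ) (hBB : ∀ x, -M ≤ φ x)
    (R : ℝ) (hR : 0 < R)
    (G ε : ℝ) (hε : 0 < ε)
    (hT : ∀ x : Rd d, R ≤ ‖x‖ → |φ x| ≤ G * ‖x‖ ^ (-(d:ℝ) - ε))
    (lm0 : ℝ) (hlm0 : 0 < lm0) :
    ∃ Ψt : ℕ → ℝ, (∀ n, 0 ≤ Ψt n) ∧ Antitone Ψt ∧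
      Summable (fun r : Zd d => Ψt (znorm r)) ∧
      ∀ l : ℝ, lm0 ≤ l → ∀ Z Z' : Finset (Rd d), Disjoint Z Z' →
        -(∑' p : Zd d × Zd d, Ψt (znorm (p.1 - p.2)) *
            (cnt (Z : Set (Rd d)) 1 p.1 : ℝ) * (cnt (Z' : Set (Rd d)) 1 p.2 : ℝ)) ≤
          interEF (philam φ l) Z Z' := by
  set q : ℝ := d + ε
  have hq : (d : ℝ) < q := lt_add_of_pos_right _ hε
  have hq0 : 0 ≤ q := by positivity
  obtain ⟨A, hA0, hA⟩ := exists_neg_mul_one_add_norm_rpow_le hR hq0 hBB fun x hx => by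
    have := hT x hx
    rw [sub_eq_add_neg, ← neg_add] at this
    linarith [neg_abs_le (φ x)]
  obtain ⟨K, hK0, hK⟩ := exists_neg_mul_one_add_norm_rpow_le_philam hA0 hA hq hlm0
  refine ⟨fun n => K * 2 ^ q * (1 + n) ^ (-q), fun n => by positivity, fun m n hmn => ?_, ?_, ?_⟩
  · exact mul_le_mul_of_nonneg_left
      (Real.rpow_le_rpow_of_nonpos (by positivity) (by gcongr) (by linarith)) (by positivity)
  · simpa only [znorm_eq_norm] using
      (summable_one_add_norm_rpow_neg (ι := Fin d) (by simpa using hq)).mul_left (K * 2 ^ q)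
  · intro l hl Z Z' _
    rw [← sum_sum_cubeIndex_eq_tsum Z Z' fun r r' => K * 2 ^ q * (1 + znorm (r - r')) ^ (-q),
      interEF, ← Finset.sum_neg_distrib]
    refine Finset.sum_le_sum fun x _ => ?_
    rw [← Finset.sum_neg_distrib]
    refine Finset.sum_le_sum fun y _ => le_trans ?_ (hK l hl (x - y))
    have hxy : (1 + ‖x - y‖) ^ (-q) ≤ 2 ^ q * (1 + znorm (cubeIndex x - cubeIndex y)) ^ (-q) :=
      rpow_neg_le_of_le_mul (by positivity) (by positivity) two_pos hq0
        (by rw [znorm_eq_norm]; linarith [norm_cubeIndex_sub_le x y, norm_nonneg (x - y)])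
    have := mul_le_mul_of_nonneg_left hxy hK0
    linarith

theorem stmt6 (d : ℕ) (hd : 1 ≤ d)
    (φ : Rd d → ℝ) (hmeas : Measurable φ) (hsymm : ∀ x, φ (-x) = φ x)
    (M : ℝ) (hBB : ∀ x, -M ≤ φ x)
    (R : ℝ) (hR : 0 < R)
    (Φ : ℝ → ℝ) (hΦnn : ∀ t ∈ Set.Ioi (0:ℝ), 0 ≤ Φ t)
    (hΦcont : ContinuousOn Φ (Set.Ioi 0)) (hΦanti : AntitoneOn Φ (Set.Ioi 0))
    (hΦtend : Tendsto (fun t => Φ t * t ^ d) (nhdsWithin 0 (Set.Ioi 0)) atTop)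
    (hRP : ∀ x : Rd d, x ≠ 0 → ‖x‖ ≤ R → Φ ‖x‖ ≤ φ x)
    (hUB : ∀ r : ℝ, 0 < r → ∃ C, ∀ x : Rd d, r ≤ ‖x‖ → φ x ≤ C)
    (G ε : ℝ) (hε : 0 < ε)
    (hT : ∀ x : Rd d, R ≤ ‖x‖ → |φ x| ≤ G * ‖x‖ ^ (-(d:ℝ) - ε))
    (lm0 : ℝ) (hlm0 : 0 < lm0) :
    ∃ Ψt : ℕ → ℝ, (∀ n, 0 ≤ Ψt n) ∧ Antitone Ψt ∧
      Summable (fun r : Zd d => Ψt (znorm r)) ∧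
      ∀ l : ℝ, lm0 ≤ l → ∀ Z Z' : Finset (Rd d), Disjoint Z Z' →
        -(∑' p : Zd d × Zd d, Ψt (znorm (p.1 - p.2)) *
            (cnt (Z : Set (Rd d)) 1 p.1 : ℝ) * (cnt (Z' : Set (Rd d)) 1 p.2 : ℝ)) ≤
          interEF (philam φ l) Z Z' :=
  stmt6_general d φ M hBB R hR G ε hε hT lm0 hlm0

end
end

section
/- Let φ satisfy (BB), (RP) and (T), let λ > 0, and let Z ⊆ Λ_λ be a finite set having distances < λ. For k ∈ ℕ set Z_k := ∪_{r∈ℤ^d, |r|≤k}(Z + 2λr). Then there exists a constant C < ∞ (depending on Z, λ and φ) such that |U_{φ_λ}(Z_k) − (2k−1)^d·Ũ_{φ,λ}(Z)| ≤ C·k^{d−1} for all k ∈ ℕ; in particular Ũ_{φ,λ}(Z) = lim_{k→∞} (2k−1)^{−d}·U_{φ_λ}(Z_k). -/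
open MeasureTheory Filter Set
open scoped BigOperators ENNReal Topology

noncomputable section

/-- U_ψ(Z): the sum of ψ(x−y) over unordered pairs of distinct points of Z
(for symmetric ψ). -/
def pairE {d : ℕ} (ψ : Rd d → ℝ) (Z : Finset (Rd d)) : ℝ :=
  (∑ x ∈ Z, ∑ y ∈ Z.erase x, ψ (x - y)) / 2

/-- The periodic energy Ũ_{φ,λ}(Z) = Σ_{{x,y}⊆Z} Σ_{r∈ℤ^d} φ(x−y+2λr). -/
def perE {d : ℕ} (φ : Rd d → ℝ) (l : ℝ) (Z : Finset (Rd d)) : ℝ :=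
  (∑ x ∈ Z, ∑ y ∈ Z.erase x, periodize φ l (x - y)) / 2

/-- Z has distances < λ. -/
def hasDistLt {d : ℕ} (l : ℝ) (Z : Finset (Rd d)) : Prop :=
  ∀ x ∈ Z, ∀ y ∈ Z, ∀ i, x i - y i ≠ l

/-- The lattice points r ∈ ℤ^d with |r| ≤ k, as a finset. -/
def ballZ (d k : ℕ) : Finset (Zd d) :=
  Fintype.piFinset fun _ => Finset.Icc (-(k:ℤ)) (k:ℤ)

/-- Z_k = ∪_{r∈ℤ^d, |r|≤k} (Z + 2λr), as a finset. -/
def Zkfin {d : ℕ} (l : ℝ) (Z : Finset (Rd d)) (k : ℕ) : Finset (Rd d) :=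
  (Z ×ˢ ballZ d k).image fun p => shiftPt l p.1 p.2

/-!
For `z, z' ∈ Z` every coordinate of `w = z - z'` lies in `(-2λ, 2λ)` and differs from `±λ`, so
exactly one lattice vector `t(w) ∈ {-1, 0, 1}^d` moves `w` into the open cube, and
`φ_λ(w + 2λu)` is the periodic sum at `w` when `u = t(w)` and `0` otherwise. Writing the points
of `Z_k` as `z + 2λr` with `|r| ≤ k` (uniquely, as `Z ⊆ Λ_λ`), this gives
`U_{φ_λ}(Z_k) = Σ_{z ≠ z'} Σ_r φ(z - z' + 2λr) · N_k(t(z - z')) / 2`, where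
`N_k(t) = #{(r, s) : |r|, |s| ≤ k, r - s = t}` lies between `(2k-1)^d` and `(2k+1)^d`,
whose difference is `O(k^{d-1})`.
-/

lemma eq_zero_of_abs_mul_intCast_lt {l : ℝ} {c : ℤ} (h : |l * c| < l) : c = 0 := by
  by_contra hc
  have hc1 : (1 : ℝ) ≤ |(c : ℝ)| := by exact_mod_cast Int.one_le_abs hc
  rw [abs_mul] at h
  nlinarith [le_abs_self l, abs_nonneg l]

lemma Finset.sum_sum_erase_eq_sub {α M : Type*} [DecidableEq α] [AddCommGroup M]
    (s : Finset α) (f : α → α → M) :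
    ∑ x ∈ s, ∑ y ∈ s.erase x, f x y = ∑ x ∈ s, ∑ y ∈ s, f x y - ∑ x ∈ s, f x x := by
  rw [← Finset.sum_sub_distrib]
  exact Finset.sum_congr rfl fun x hx => Finset.sum_erase_eq_sub hx

lemma abs_sum_mul_sub_mul_sum_le {ι : Type*} (s : Finset ι) (a N : ι → ℝ) {c Δ : ℝ}
    (h : ∀ i ∈ s, |N i - c| ≤ Δ) :
    |∑ i ∈ s, a i * N i - c * ∑ i ∈ s, a i| ≤ (∑ i ∈ s, |a i|) * Δ := by
  rw [Finset.mul_sum, ← Finset.sum_sub_distrib, Finset.sum_mul]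
  refine (Finset.abs_sum_le_sum_abs _ _).trans (Finset.sum_le_sum fun i hi => ?_)
  rw [mul_comm c, ← mul_sub, abs_mul]
  exact mul_le_mul_of_nonneg_left (h i hi) (abs_nonneg _)

lemma tendsto_inv_mul_of_natCast_mul_abs_sub_le {x c : ℕ → ℝ} {L K : ℝ}
    (hc : ∀ᶠ k in atTop, 0 < c k) (h : ∀ᶠ k in atTop, k * |x k - c k * L| ≤ K * c k) :
    Tendsto (fun k => (c k)⁻¹ * x k) atTop (𝓝 L) := by
  rw [tendsto_iff_norm_sub_tendsto_zero]
  refine squeeze_zero_norm' ?_ (tendsto_const_div_atTop_nhds_zero_nat K)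
  filter_upwards [hc, h, eventually_gt_atTop 0] with k hck hk hk0
  have hk0' : (0 : ℝ) < k := by exact_mod_cast hk0
  rw [norm_norm, Real.norm_eq_abs, le_div_iff₀ hk0',
    show (c k)⁻¹ * x k - L = (c k)⁻¹ * (x k - c k * L) by field_simp, abs_mul,
    abs_inv, abs_of_pos hck]
  calc (c k)⁻¹ * |x k - c k * L| * k = (c k)⁻¹ * (k * |x k - c k * L|) := by ring
    _ ≤ (c k)⁻¹ * (K * c k) := by gcongr
    _ = K := by field_simp

lemma natCast_mul_pow_pred_mul (d : ℕ) (x : ℝ) : d * x ^ (d - 1) * x = d * x ^ d := by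
  cases d <;> simp [pow_succ, mul_assoc]

section Lattice

variable {d : ℕ}

lemma shiftPt_shiftPt (l : ℝ) (y : Rd d) (u r : Zd d) :
    shiftPt l (shiftPt l y u) r = shiftPt l y (u + r) := by
  funext i; simp only [shiftPt, Pi.add_apply]; push_cast; ring

lemma shiftPt_sub_shiftPt (l : ℝ) (y y' : Rd d) (r s : Zd d) :
    shiftPt l y r - shiftPt l y' s = shiftPt l (y - y') (r - s) := by
  funext i; simp only [shiftPt, Pi.sub_apply]; push_cast; ring

lemma periodize_shiftPt (φ : Rd d → ℝ) (l : ℝ) (y : Rd d) (u : Zd d) :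
    periodize φ l (shiftPt l y u) = periodize φ l y := by
  unfold periodize
  rw [← (Equiv.addLeft u).tsum_eq (fun v => φ (shiftPt l y v))]
  exact tsum_congr fun r => by rw [shiftPt_shiftPt]; rfl

lemma shiftPt_injOn (l : ℝ) :
    InjOn (fun p : Rd d × Zd d => shiftPt l p.1 p.2) (Lam l ×ˢ univ) := by
  rintro ⟨y, r⟩ ⟨hy, -⟩ ⟨y', s⟩ ⟨hy', -⟩ h
  have hcoord : ∀ i, y' i - y i = 2 * l * ((r i - s i : ℤ) : ℝ) := fun i => by
    have := congrFun h i; simp only [shiftPt] at this; push_cast; linarith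
  have hrs : r = s := funext fun i => by
    have hlt : |y' i - y i| < 2 * l :=
      abs_lt.mpr ⟨by linarith [(hy i).2, (hy' i).1], by linarith [(hy i).1, (hy' i).2]⟩
    rw [hcoord i] at hlt
    exact sub_eq_zero.mp (eq_zero_of_abs_mul_intCast_lt hlt)
  subst hrs
  exact Prod.ext (funext fun i => show y i = y' i by
    have := hcoord i; simp only [sub_self, Int.cast_zero, mul_zero] at this; linarith) rfl

/-- The unique `t` with `w + 2λt ∈ (-λ, λ)^d` when every `|wᵢ| < 2λ` and `|wᵢ| ≠ λ`. -/
def cubeShift (l : ℝ) (w : Rd d) : Zd d :=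
  fun i => if w i < -l then 1 else if l < w i then -1 else 0

lemma abs_cubeShift_le (l : ℝ) (w : Rd d) (i : Fin d) : |cubeShift l w i| ≤ 1 := by
  unfold cubeShift; split_ifs <;> decide

lemma cubeShift_zero {l : ℝ} (hl : 0 < l) : cubeShift l (0 : Rd d) = 0 := by
  funext i
  simp only [cubeShift, Pi.zero_apply]
  rw [if_neg (by linarith), if_neg (by linarith)]

lemma shiftPt_cubeShift_mem_LamO {l : ℝ} {w : Rd d} (hw : ∀ i, |w i| < 2 * l ∧ |w i| ≠ l) :
    shiftPt l w (cubeShift l w) ∈ LamO l := by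
  intro i
  obtain ⟨hlt, hne⟩ := hw i
  obtain ⟨h1, h2⟩ := abs_lt.mp hlt
  simp only [shiftPt, cubeShift]
  split_ifs with ha hb
  · push_cast; constructor <;> linarith
  · push_cast; constructor <;> linarith
  · have := abs_lt.mp (lt_of_le_of_ne (abs_le.mpr ⟨not_lt.mp ha, not_lt.mp hb⟩) hne)
    push_cast; constructor <;> linarith

lemma shiftPt_mem_LamO_iff {l : ℝ} {w : Rd d} (hw : ∀ i, |w i| < 2 * l ∧ |w i| ≠ l)
    (u : Zd d) : shiftPt l w u ∈ LamO l ↔ u = cubeShift l w := by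
  refine ⟨fun hu => funext fun i => ?_, fun h => h ▸ shiftPt_cubeShift_mem_LamO hw⟩
  obtain ⟨h1, h2⟩ := hu i
  obtain ⟨h3, h4⟩ := shiftPt_cubeShift_mem_LamO hw i
  simp only [shiftPt] at h1 h2 h3 h4
  have hlt : |2 * l * ((u i - cubeShift l w i : ℤ) : ℝ)| < 2 * l := by
    push_cast; exact abs_lt.mpr ⟨by linarith, by linarith⟩
  exact sub_eq_zero.mp (eq_zero_of_abs_mul_intCast_lt hlt)

lemma philam_shiftPt (φ : Rd d → ℝ) {l : ℝ} {w : Rd d}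
    (hw : ∀ i, |w i| < 2 * l ∧ |w i| ≠ l) (u : Zd d) :
    philam φ l (shiftPt l w u) = if u = cubeShift l w then periodize φ l w else 0 := by
  unfold philam
  split_ifs with hu
  · rw [indicator_of_mem ((shiftPt_mem_LamO_iff hw u).mpr hu), periodize_shiftPt]
  · exact indicator_of_notMem (fun h => hu ((shiftPt_mem_LamO_iff hw u).mp h)) _

lemma abs_sub_apply_lt_and_ne_of_hasDistLt {l : ℝ} {Z : Finset (Rd d)}
    (hZ : (Z : Set (Rd d)) ⊆ Lam l) (hdist : hasDistLt l Z) {z z' : Rd d} (hz : z ∈ Z)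
    (hz' : z' ∈ Z) (i : Fin d) :
    |(z - z') i| < 2 * l ∧ |(z - z') i| ≠ l := by
  obtain ⟨h1, h2⟩ := hZ hz i
  obtain ⟨h3, h4⟩ := hZ hz' i
  simp only [Pi.sub_apply] at *
  refine ⟨abs_lt.mpr ⟨by linarith, by linarith⟩, fun h => ?_⟩
  rcases (abs_eq (by linarith)).mp h with h | h
  · exact hdist z hz z' hz' i h
  · exact hdist z' hz' z hz i (by linarith)

end Lattice

section Counting

def diffCount (d k : ℕ) (t : Zd d) : ℕ :=
  ((ballZ d k ×ˢ ballZ d k).filter fun q => q.1 - q.2 = t).card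

lemma card_ballZ (d k : ℕ) : (ballZ d k).card = (2 * k + 1) ^ d := by
  rw [ballZ, Fintype.card_piFinset, Int.card_Icc, Finset.prod_const, Finset.card_univ,
    Fintype.card_fin, show ((k : ℤ) + 1 - -(k : ℤ)).toNat = 2 * k + 1 by omega]

lemma diffCount_zero (d k : ℕ) : diffCount d k 0 = (ballZ d k).card := by
  rw [diffCount, ← Finset.diag_card (ballZ d k)]
  refine congrArg Finset.card (Finset.ext fun q => ?_)
  simp only [Finset.mem_filter, Finset.mem_product, Finset.mem_diag, sub_eq_zero]
  exact ⟨fun ⟨⟨h1, _⟩, h3⟩ => ⟨h1, h3⟩, fun ⟨h1, h3⟩ => ⟨⟨h1, h3 ▸ h1⟩, h3⟩⟩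

lemma diffCount_le (d k : ℕ) (t : Zd d) : diffCount d k t ≤ (2 * k + 1) ^ d := by
  rw [← card_ballZ d k]
  refine Finset.card_le_card_of_injOn Prod.snd (fun q hq => ?_) fun p hp q hq h => ?_
  · exact (Finset.mem_product.mp (Finset.mem_filter.mp hq).1).2
  · have hp' := (Finset.mem_filter.mp hp).2
    have hq' := (Finset.mem_filter.mp hq).2
    exact Prod.ext (by rw [← sub_left_inj, hp', ← hq', h]) h

lemma pow_le_diffCount (d k : ℕ) {t : Zd d} (ht : ∀ i, |t i| ≤ 1) :
    (2 * k - 1) ^ d ≤ diffCount d k t := by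
  have hcard : (Fintype.piFinset fun _ : Fin d => Finset.Icc (-(k : ℤ) + 1) ((k : ℤ) - 1)).card
      = (2 * k - 1) ^ d := by
    rw [Fintype.card_piFinset, Int.card_Icc, Finset.prod_const, Finset.card_univ,
      Fintype.card_fin, show ((k : ℤ) - 1 + 1 - (-(k : ℤ) + 1)).toNat = 2 * k - 1 by omega]
  rw [← hcard]
  refine Finset.card_le_card_of_injOn (fun s => (s + t, s)) (fun s hs => ?_)
    fun p _ q _ h => (Prod.ext_iff.mp h).2
  simp only [Finset.mem_coe, Fintype.mem_piFinset, Finset.mem_Icc] at hs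
  simp only [Finset.mem_coe, Finset.mem_filter, Finset.mem_product, ballZ,
    Fintype.mem_piFinset, Finset.mem_Icc, Pi.add_apply, add_sub_cancel_left, and_true]
  exact ⟨fun i => by have := abs_le.mp (ht i); have := hs i; omega,
    fun i => by have := hs i; omega⟩

lemma abs_diffCount_sub_pow_le (d : ℕ) {k : ℕ} (hk : 1 ≤ k) {t : Zd d} (ht : ∀ i, |t i| ≤ 1) :
    |(diffCount d k t : ℝ) - (2 * k - 1) ^ d| ≤ 2 * 3 ^ (d - 1) * d * k ^ (d - 1) := by
  have hk1 : (1 : ℝ) ≤ k := by exact_mod_cast hk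
  have hlow : ((2 * k - 1 : ℝ)) ^ d ≤ diffCount d k t := by
    have := pow_le_diffCount d k ht
    rw [← Nat.cast_le (α := ℝ), Nat.cast_pow, Nat.cast_sub (by omega)] at this
    simpa using this
  have hup : (diffCount d k t : ℝ) ≤ (2 * k + 1) ^ d := by
    exact_mod_cast diffCount_le d k t
  have hgap : (2 * (k : ℝ) + 1) ^ d - (2 * k - 1) ^ d ≤ 2 * d * (2 * k + 1) ^ (d - 1) := by
    have hmax : max |2 * (k : ℝ) + 1| |2 * k - 1| = 2 * k + 1 := by
      rw [abs_of_pos (by linarith), abs_of_pos (by linarith)]; exact max_eq_left (by linarith)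
    have := abs_pow_sub_pow_le (2 * (k : ℝ) + 1) (2 * k - 1) d
    rw [hmax, show 2 * (k : ℝ) + 1 - (2 * k - 1) = 2 by ring, abs_two] at this
    exact (le_abs_self _).trans this
  have h3k : (2 * (k : ℝ) + 1) ^ (d - 1) ≤ 3 ^ (d - 1) * k ^ (d - 1) := by
    rw [← mul_pow]; gcongr; linarith
  rw [abs_of_nonneg (by linarith)]
  calc (diffCount d k t : ℝ) - (2 * k - 1) ^ d ≤ (2 * k + 1) ^ d - (2 * k - 1) ^ d := by linarith
    _ ≤ 2 * d * (2 * k + 1) ^ (d - 1) := hgap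
    _ ≤ 2 * d * (3 ^ (d - 1) * k ^ (d - 1)) := by gcongr
    _ = 2 * 3 ^ (d - 1) * d * k ^ (d - 1) := by ring

end Counting

section Energy

variable {d : ℕ} {l : ℝ} {Z : Finset (Rd d)}

lemma shiftPt_injOn_product (hZ : (Z : Set (Rd d)) ⊆ Lam l) (B : Finset (Zd d)) :
    InjOn (fun p : Rd d × Zd d => shiftPt l p.1 p.2) (Z ×ˢ B : Finset _) :=
  (shiftPt_injOn l).mono (by rw [Finset.coe_product]; exact prod_mono hZ (subset_univ _))

lemma card_Zkfin (hZ : (Z : Set (Rd d)) ⊆ Lam l) (k : ℕ) :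
    (Zkfin l Z k).card = Z.card * (ballZ d k).card := by
  rw [Zkfin, Finset.card_image_of_injOn (shiftPt_injOn_product hZ _), Finset.card_product]

lemma sum_sum_Zkfin (hZ : (Z : Set (Rd d)) ⊆ Lam l) (k : ℕ) (ψ : Rd d → ℝ) :
    ∑ x ∈ Zkfin l Z k, ∑ y ∈ Zkfin l Z k, ψ (x - y) =
      ∑ z ∈ Z, ∑ z' ∈ Z, ∑ r ∈ ballZ d k, ∑ s ∈ ballZ d k, ψ (shiftPt l (z - z') (r - s)) := by
  simp only [Zkfin, Finset.sum_image (shiftPt_injOn_product hZ _), Finset.sum_product, shiftPt_sub_shiftPt]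
  exact Finset.sum_congr rfl fun z _ => Finset.sum_comm

lemma sum_sum_philam_shiftPt (φ : Rd d → ℝ) {w : Rd d} (hw : ∀ i, |w i| < 2 * l ∧ |w i| ≠ l)
    (k : ℕ) : ∑ r ∈ ballZ d k, ∑ s ∈ ballZ d k, philam φ l (shiftPt l w (r - s)) =
      periodize φ l w * diffCount d k (cubeShift l w) := by
  simp only [philam_shiftPt φ hw]
  rw [← Finset.sum_product', Finset.sum_ite, Finset.sum_const, Finset.sum_const_zero, add_zero,
    nsmul_eq_mul, mul_comm, diffCount]

lemma pairE_philam_Zkfin (φ : Rd d → ℝ) (hl : 0 < l) (hZ : (Z : Set (Rd d)) ⊆ Lam l)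
    (hdist : hasDistLt l Z) (k : ℕ) :
    pairE (philam φ l) (Zkfin l Z k) = (∑ z ∈ Z, ∑ z' ∈ Z.erase z,
      periodize φ l (z - z') * diffCount d k (cubeShift l (z - z'))) / 2 := by
  have h0 : philam φ l 0 = periodize φ l 0 :=
    indicator_of_mem (fun i => ⟨by simp [hl], by simp [hl]⟩) _
  have hdiag : ∑ x ∈ Zkfin l Z k, philam φ l (x - x) =
      ∑ z ∈ Z, periodize φ l (z - z) * diffCount d k (cubeShift l (z - z)) := by
    simp only [sub_self, Finset.sum_const, cubeShift_zero hl, diffCount_zero, h0, card_Zkfin hZ,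
      nsmul_eq_mul]
    push_cast; ring
  rw [pairE, Finset.sum_sum_erase_eq_sub, Finset.sum_sum_erase_eq_sub, hdiag,
    sum_sum_Zkfin hZ]
  congr 2
  exact Finset.sum_congr rfl fun z hz => Finset.sum_congr rfl fun z' hz' =>
    sum_sum_philam_shiftPt φ (abs_sub_apply_lt_and_ne_of_hasDistLt hZ hdist hz hz') k

lemma abs_pairE_philam_Zkfin_sub_le (φ : Rd d → ℝ) (hl : 0 < l)
    (hZ : (Z : Set (Rd d)) ⊆ Lam l) (hdist : hasDistLt l Z) {k : ℕ} (hk : 1 ≤ k) :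
    |pairE (philam φ l) (Zkfin l Z k) - (2 * (k : ℝ) - 1) ^ d * perE φ l Z| ≤
      (∑ z ∈ Z, ∑ z' ∈ Z.erase z, |periodize φ l (z - z')|) / 2 *
        (2 * 3 ^ (d - 1) * d * k ^ (d - 1)) := by
  rw [pairE_philam_Zkfin φ hl hZ hdist, perE, mul_div_assoc', ← sub_div, abs_div, abs_two,
    div_mul_eq_mul_div]
  gcongr
  simp only [Finset.sum_sigma']
  exact abs_sum_mul_sub_mul_sum_le _ _ _ fun _ _ => abs_diffCount_sub_pow_le d hk
    (abs_cubeShift_le l _)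

end Energy

theorem stmt8_general (d : ℕ)
    (φ : Rd d → ℝ)
    (l : ℝ) (hl : 0 < l)
    (Z : Finset (Rd d)) (hZ : (Z : Set (Rd d)) ⊆ Lam l) (hdist : hasDistLt l Z) :
    ∃ C : ℝ,
      (∀ k : ℕ, 1 ≤ k →
        |pairE (philam φ l) (Zkfin l Z k) - (2 * (k:ℝ) - 1) ^ d * perE φ l Z| ≤
          C * (k:ℝ) ^ (d - 1)) ∧
      Tendsto (fun k : ℕ => ((2 * (k:ℝ) - 1) ^ d)⁻¹ * pairE (philam φ l) (Zkfin l Z k))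
        atTop (nhds (perE φ l Z)) := by
  set A := (∑ z ∈ Z, ∑ z' ∈ Z.erase z, |periodize φ l (z - z')|) / 2
  have hA : 0 ≤ A := by positivity
  have hbound : ∀ k : ℕ, 1 ≤ k →
      |pairE (philam φ l) (Zkfin l Z k) - (2 * (k:ℝ) - 1) ^ d * perE φ l Z| ≤
        A * (2 * 3 ^ (d - 1)) * (d * (k:ℝ) ^ (d - 1)) := fun k hk =>
    (abs_pairE_philam_Zkfin_sub_le φ hl hZ hdist hk).trans_eq (by ring)
  refine ⟨A * (2 * 3 ^ (d - 1)) * d, fun k hk => (hbound k hk).trans_eq (by ring),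
    tendsto_inv_mul_of_natCast_mul_abs_sub_le (K := A * (2 * 3 ^ (d - 1)) * d) ?_ ?_⟩
  · filter_upwards [eventually_ge_atTop 1] with k hk
    have : (1 : ℝ) ≤ k := by exact_mod_cast hk
    exact pow_pos (by linarith) d
  · filter_upwards [eventually_ge_atTop 1] with k hk
    have hk1 : (1 : ℝ) ≤ k := by exact_mod_cast hk
    calc (k : ℝ) * |_| ≤ k * (A * (2 * 3 ^ (d - 1)) * (d * (k:ℝ) ^ (d - 1))) := by
          gcongr; exact hbound k hk
      _ = A * (2 * 3 ^ (d - 1)) * (d * k ^ (d - 1) * k) := by ring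
      _ = A * (2 * 3 ^ (d - 1)) * (d * k ^ d) := by rw [natCast_mul_pow_pred_mul]
      _ ≤ A * (2 * 3 ^ (d - 1)) * (d * (2 * k - 1) ^ d) := by gcongr; linarith
      _ = A * (2 * 3 ^ (d - 1)) * d * (2 * k - 1) ^ d := by ring

theorem stmt8 (d : ℕ) (hd : 1 ≤ d)
    (φ : Rd d → ℝ) (hmeas : Measurable φ) (hsymm : ∀ x, φ (-x) = φ x)
    (M : ℝ) (hBB : ∀ x, -M ≤ φ x)
    (R : ℝ) (hR : 0 < R)
    (Φ : ℝ → ℝ) (hΦnn : ∀ t ∈ Set.Ioi (0:ℝ), 0 ≤ Φ t)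
    (hΦcont : ContinuousOn Φ (Set.Ioi 0)) (hΦanti : AntitoneOn Φ (Set.Ioi 0))
    (hΦtend : Tendsto (fun t => Φ t * t ^ d) (nhdsWithin 0 (Set.Ioi 0)) atTop)
    (hRP : ∀ x : Rd d, x ≠ 0 → ‖x‖ ≤ R → Φ ‖x‖ ≤ φ x)
    (hUB : ∀ r : ℝ, 0 < r → ∃ C, ∀ x : Rd d, r ≤ ‖x‖ → φ x ≤ C)
    (G ε : ℝ) (hε : 0 < ε)
    (hT : ∀ x : Rd d, R ≤ ‖x‖ → |φ x| ≤ G * ‖x‖ ^ (-(d:ℝ) - ε))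
    (l : ℝ) (hl : 0 < l)
    (Z : Finset (Rd d)) (hZ : (Z : Set (Rd d)) ⊆ Lam l) (hdist : hasDistLt l Z) :
    ∃ C : ℝ,
      (∀ k : ℕ, 1 ≤ k →
        |pairE (philam φ l) (Zkfin l Z k) - (2 * (k:ℝ) - 1) ^ d * perE φ l Z| ≤
          C * (k:ℝ) ^ (d - 1)) ∧
      Tendsto (fun k : ℕ => ((2 * (k:ℝ) - 1) ^ d)⁻¹ * pairE (philam φ l) (Zkfin l Z k))
        atTop (nhds (perE φ l Z)) :=
  stmt8_general d φ l hl Z hZ hdist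
end
end
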